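/- Every positive integer solution of the Markov equation a² + b² + c² = 3abc can be obtained from (1,1,1) by a finite sequence of Vieta mutations (a,b,c) ↦ (3bc − a, b, c) and permutations of coordinates. -/
import Mathlib


/-- One step of the Markov tree: a Vieta mutation in the first coordinate,
or a transposition of coordinates (transpositions generate all permutations). -/
def MarkovStep (p q : ℤ × ℤ × ℤ) : Prop :=
  q = (3 * p.2.1 * p.2.2 - p.1, p.2.1, p.2.2) ∨
  q = (p.2.1, p.1, p.2.2) ∨
  q = (p.1, p.2.2, p.2.1)

lemma markov_step_mut (a b c : ℤ) : MarkovStep (a, b, c) (3 * b * c - a, b, c) :=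
  Or.inl rfl

lemma markov_step_s12 (a b c : ℤ) : MarkovStep (a, b, c) (b, a, c) :=
  Or.inr (Or.inl rfl)

lemma markov_step_s23 (a b c : ℤ) : MarkovStep (a, b, c) (a, c, b) :=
  Or.inr (Or.inr rfl)

open Relation in
lemma markov_aux : ∀ n : ℕ, ∀ a b c : ℤ, 0 < a → 0 < b → 0 < c → c ≤ b → b ≤ a →
    a ^ 2 + b ^ 2 + c ^ 2 = 3 * a * b * c → a + b + c ≤ (n : ℤ) →
    ReflTransGen MarkovStep (1, 1, 1) (a, b, c) := by
  intro n
  induction n with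
  | zero =>
    intro a b c ha hb hc _ _ _ hn
    exfalso; push_cast at hn; omega
  | succ n ih =>
    intro a b c ha hb hc hcb hba heq hn
    rcases eq_or_lt_of_le (show (1:ℤ) ≤ a from ha) with h1 | h2
    · -- a = 1, hence a = b = c = 1
      have hb1 : b = 1 := by omega
      have hc1 : c = 1 := by omega
      rw [← h1, hb1, hc1]
    · have ha2 : (2:ℤ) ≤ a := h2
      obtain ⟨x, hxdef⟩ : ∃ x : ℤ, x = 3 * b * c - a := ⟨_, rfl⟩
      have hxpos : 0 < x := by nlinarith
      have hxb : x ≤ b := by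
        rcases eq_or_lt_of_le (show (1:ℤ) ≤ c from hc) with hc1 | hc2
        · -- c = 1
          subst hc1
          rcases eq_or_lt_of_le (show (1:ℤ) ≤ b from hb) with hb1 | hb2
          · -- b = 1 : a^2 + 2 = 3a, a ≥ 2 ⇒ a = 2
            subst hb1
            have hA : a = 2 := by nlinarith [sq_nonneg (a - 2)]
            rw [hxdef, hA]; norm_num
          · -- b ≥ 2, c = 1
            by_contra hcon
            push_neg at hcon
            rw [hxdef] at hcon
            nlinarith [mul_nonneg (sub_nonneg.2 hba) (by linarith : (0:ℤ) ≤ 2*b - a)]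
        · -- c ≥ 2
          by_contra hcon
          push_neg at hcon
          rw [hxdef] at hcon
          nlinarith [mul_nonneg (sub_nonneg.2 hba) (by linarith : (0:ℤ) ≤ 3*b*c - a - b),
            mul_nonneg (sub_nonneg.2 hcb) (by linarith : (0:ℤ) ≤ b + c),
            mul_nonneg (by linarith : (0:ℤ) ≤ c - 2) (mul_self_nonneg b)]
      have hxa : x < a := by
        rcases lt_or_eq_of_le hba with h | h
        · exact lt_of_le_of_lt hxb h
        · -- b = a : no solution with a ≥ 2
          exfalso
          subst h
          rcases eq_or_lt_of_le (show (1:ℤ) ≤ c from hc) with hc1 | hc2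
          · subst hc1; nlinarith
          · nlinarith [mul_nonneg (by linarith : (0:ℤ) ≤ c - 2) (mul_self_nonneg b),
              mul_nonneg (sub_nonneg.2 hcb) (by linarith : (0:ℤ) ≤ b + c)]
      have hxeq : x ^ 2 + b ^ 2 + c ^ 2 = 3 * x * b * c := by
        rw [hxdef]; linear_combination heq
      have hsum : x + b + c ≤ (n : ℤ) := by push_cast at hn ⊢; omega
      have hback : (3 * b * c - x, b, c) = (a, b, c) := by
        rw [hxdef]; norm_num
      rcases le_total c x with hcx | hxc
      · -- sorted new triple : (b, x, c)
        have hib : x ≤ b := hxb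
        have path : ReflTransGen MarkovStep (1, 1, 1) (b, x, c) := by
          apply ih b x c hb hxpos hc hcx hib
          · linear_combination hxeq
          · linarith
        have p2 : ReflTransGen MarkovStep (1, 1, 1) (x, b, c) :=
          path.tail (markov_step_s12 b x c)
        have p3 := p2.tail (markov_step_mut x b c)
        rwa [hback] at p3
      · -- sorted new triple : (b, c, x)
        have path : ReflTransGen MarkovStep (1, 1, 1) (b, c, x) := by
          apply ih b c x hb hc hxpos hxc hcb
          · linear_combination hxeq
          · linarith
        have p2 : ReflTransGen MarkovStep (1, 1, 1) (x, b, c) :=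
          (path.tail (markov_step_s23 b c x)).tail (markov_step_s12 b x c)
        have p3 := p2.tail (markov_step_mut x b c)
        rwa [hback] at p3

/-- Every positive integer solution of the Markov equation a² + b² + c² = 3abc
is obtained from (1,1,1) by a finite sequence of Vieta mutations and permutations. -/
theorem markov_tree_connected (a b c : ℤ) (ha : 0 < a) (hb : 0 < b) (hc : 0 < c)
    (h : a ^ 2 + b ^ 2 + c ^ 2 = 3 * a * b * c) :
    Relation.ReflTransGen MarkovStep (1, 1, 1) (a, b, c) := by
  have key : ∀ p q r : ℤ, 0 < p → 0 < q → 0 < r → r ≤ q → q ≤ p →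
      p ^ 2 + q ^ 2 + r ^ 2 = 3 * p * q * r →
      Relation.ReflTransGen MarkovStep (1, 1, 1) (p, q, r) := by
    intro p q r hp hq hr hrq hqp heq
    exact markov_aux (p + q + r).toNat p q r hp hq hr hrq hqp heq (by omega)
  rcases le_total a b with hab | hba
  · rcases le_total b c with hbc | hcb
    · -- a ≤ b ≤ c : sorted (c, b, a)
      have s := key c b a hc hb ha hab hbc (by linear_combination h)
      exact ((s.tail (markov_step_s12 c b a)).tail (markov_step_s23 b c a)).tail
        (markov_step_s12 b a c)
    · rcases le_total a c with hac | hca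
      · -- a ≤ c ≤ b : sorted (b, c, a)
        have s := key b c a hb hc ha hac hcb (by linear_combination h)
        exact (s.tail (markov_step_s23 b c a)).tail (markov_step_s12 b a c)
      · -- c ≤ a ≤ b : sorted (b, a, c)
        have s := key b a c hb ha hc hca hab (by linear_combination h)
        exact s.tail (markov_step_s12 b a c)
  · rcases le_total b c with hbc | hcb
    · rcases le_total a c with hac | hca
      · -- b ≤ a ≤ c : sorted (c, a, b)
        have s := key c a b hc ha hb hba hac (by linear_combination h)
        exact (s.tail (markov_step_s12 c a b)).tail (markov_step_s23 a c b)
      · -- b ≤ c ≤ a : sorted (a, c, b)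
        have s := key a c b ha hc hb hbc hca (by linear_combination h)
        exact s.tail (markov_step_s23 a c b)
    · -- c ≤ b ≤ a : sorted already
      exact key a b c ha hb hc hcb hba h
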